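/- Let n ≥ 2, let 1 ≤ k < n, let q ≥ 1 be an integer, let M be an n×n real symmetric positive-definite matrix, and let κ̂ > 1 satisfy κ(M) ≤ κ̂. Then the standard error σ̂(S_Y) = √(Var(Y_k(M))/q) of the q-sample mean of log-minors satisfies σ̂(S_Y) ≤ √(6k(n−k)/(qn))·log κ̂. -/

import Mathlib

open Matrix Real Finset

/-- The log-determinant of the principal submatrix of `M` indexed by `s`. -/
noncomputable def logMinor {n : ℕ} (M : Matrix (Fin n) (Fin n) ℝ) (s : Finset (Fin n)) : ℝ :=
  Real.log (M.submatrix (fun i : {x // x ∈ s} => (i : Fin n))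
    (fun i : {x // x ∈ s} => (i : Fin n))).det

/-- The mean of `Y_k(M)`, the log-minor of a uniformly random `k`-element index set. -/
noncomputable def meanLM {n : ℕ} (k : ℕ) (M : Matrix (Fin n) (Fin n) ℝ) : ℝ :=
  (∑ s ∈ Finset.powersetCard k (Finset.univ : Finset (Fin n)), logMinor M s) / (n.choose k)

/-- The variance of `Y_k(M)` under the uniform distribution on `k`-element index sets. -/
noncomputable def varLM {n : ℕ} (k : ℕ) (M : Matrix (Fin n) (Fin n) ℝ) : ℝ :=
  (∑ s ∈ Finset.powersetCard k (Finset.univ : Finset (Fin n)),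
    (logMinor M s - meanLM k M) ^ 2) / (n.choose k)

open Classical in
/-- `P(|Y_k(M) - E[Y_k(M)]| ≥ r)` under the uniform distribution on `k`-element index sets. -/
noncomputable def probDevLM {n : ℕ} (k : ℕ) (M : Matrix (Fin n) (Fin n) ℝ) (r : ℝ) : ℝ :=
  (((Finset.powersetCard k (Finset.univ : Finset (Fin n))).filter
      (fun s => r ≤ |logMinor M s - meanLM k M|)).card : ℝ) / (n.choose k)

/-- The largest eigenvalue `λ₁(M)` of a Hermitian matrix. -/
noncomputable def maxEig {n : ℕ} {M : Matrix (Fin n) (Fin n) ℝ} (hM : M.IsHermitian) : ℝ :=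
  ⨆ i, hM.eigenvalues i

/-- The smallest eigenvalue `λₙ(M)` of a Hermitian matrix. -/
noncomputable def minEig {n : ℕ} {M : Matrix (Fin n) (Fin n) ℝ} (hM : M.IsHermitian) : ℝ :=
  ⨅ i, hM.eigenvalues i

/-- The condition number `κ(M) = λ₁(M) / λₙ(M)` of a Hermitian matrix. -/
noncomputable def condNum {n : ℕ} {M : Matrix (Fin n) (Fin n) ℝ} (hM : M.IsHermitian) : ℝ :=
  maxEig hM / minEig hM

/-!
Adding an index `x ∉ s` multiplies `det M_s` by the Schur complement `σ = M_xx - cᵀ M_s⁻¹ c`,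
and `λₙ(M) ≤ σ ≤ λ₁(M)` because principal submatrices and Schur complements inherit the Loewner
bounds `λₙ • 1 ≤ M ≤ λ₁ • 1`. Hence exchanging one element of `s` changes `log det M_s` by at most
`log κ(M)`.

For any function on `k`-sets with such an exchange bound `c`, the uniform variance is at most
`k c²`: a uniform `(j+1)`-set is a uniform `j`-set `T` plus a uniform point outside `T`, and the
law of total variance splits the variance into the variance within a fibre (at most `c²`) and the
variance of the fibre means, which again have exchange bound `c`. Passing to complements gives
`(n - k) c²` as well, and `min k (n - k) ≤ 2k(n - k)/n`.
-/

open scoped BigOperators MatrixOrder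

namespace Finset

variable {ι α : Type*} [Fintype α] [DecidableEq α]

lemma expect_sq_sub_eq {A : Finset ι} (hA : A.Nonempty) (u : ι → ℝ) (t : ℝ) :
    𝔼 i ∈ A, (u i - t) ^ 2 = 𝔼 i ∈ A, (u i - 𝔼 j ∈ A, u j) ^ 2 + (𝔼 j ∈ A, u j - t) ^ 2 := by
  set μ := 𝔼 j ∈ A, u j
  have h : ∀ i ∈ A, (u i - t) ^ 2 = ((u i - μ) ^ 2 + 2 * (μ - t) * u i) + (t ^ 2 - μ ^ 2) :=
    fun i _ => by ring
  rw [expect_congr rfl h, expect_add_distrib, expect_add_distrib, ← mul_expect, expect_const hA]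
  ring

lemma expect_sq_sub_expect_le (A : Finset ι) (u : ι → ℝ) (t : ℝ) :
    𝔼 i ∈ A, (u i - 𝔼 j ∈ A, u j) ^ 2 ≤ 𝔼 i ∈ A, (u i - t) ^ 2 := by
  rcases A.eq_empty_or_nonempty with rfl | hA
  · simp
  · rw [expect_sq_sub_eq hA u t]
    exact le_add_of_nonneg_right (sq_nonneg _)

lemma expect_sq_sub_expect_le_sq {A : Finset ι} {u : ι → ℝ} {c : ℝ}
    (hu : ∀ x ∈ A, ∀ y ∈ A, |u x - u y| ≤ c) :
    𝔼 i ∈ A, (u i - 𝔼 j ∈ A, u j) ^ 2 ≤ c ^ 2 := by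
  rcases A.eq_empty_or_nonempty with rfl | ⟨x₀, hx₀⟩
  · simp [sq_nonneg]
  calc 𝔼 i ∈ A, (u i - 𝔼 j ∈ A, u j) ^ 2 ≤ 𝔼 i ∈ A, (u i - u x₀) ^ 2 :=
        expect_sq_sub_expect_le A u (u x₀)
    _ ≤ c ^ 2 := expect_le ⟨x₀, hx₀⟩ fun x hx => by
      obtain ⟨hlo, hhi⟩ := abs_le.mp (hu x hx x₀ hx₀)
      exact sq_le_sq' hlo hhi

lemma succ_nsmul_sum_powersetCard_succ {β : Type*} [AddCommMonoid β] (j : ℕ)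
    (h : Finset α → β) :
    (j + 1) • ∑ s ∈ powersetCard (j + 1) univ, h s =
      ∑ T ∈ powersetCard j univ, ∑ x ∈ Tᶜ, h (insert x T) := by
  have hcard : ∀ s ∈ powersetCard (j + 1) (univ : Finset α), (j + 1) • h s = ∑ _x ∈ s, h s :=
    fun s hs => by rw [sum_const, (mem_powersetCard_univ.mp hs)]
  rw [smul_sum, sum_congr rfl hcard, sum_sigma', sum_sigma']
  refine sum_nbij' (fun p => ⟨p.1.erase p.2, p.2⟩) (fun p => ⟨insert p.2 p.1, p.2⟩)
    ?_ ?_ ?_ ?_ ?_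
  · rintro ⟨s, x⟩ hp
    simp only [mem_sigma, mem_powersetCard_univ] at hp ⊢
    simp [card_erase_of_mem hp.2, hp.1]
  · rintro ⟨T, x⟩ hp
    simp only [mem_sigma, mem_powersetCard_univ, mem_compl] at hp ⊢
    simp [card_insert_of_notMem hp.2, hp.1]
  · rintro ⟨s, x⟩ hp
    simp only [mem_sigma] at hp
    simp [insert_erase hp.2]
  · rintro ⟨T, x⟩ hp
    simp only [mem_sigma, mem_compl] at hp
    simp [erase_insert hp.2]
  · rintro ⟨s, x⟩ hp
    simp only [mem_sigma] at hp
    simp [insert_erase hp.2]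

lemma card_compl_of_mem_powersetCard {j : ℕ} {T : Finset α} (hT : T ∈ powersetCard j univ) :
    #Tᶜ = Fintype.card α - j := by
  rw [card_compl, mem_powersetCard_univ.mp hT]

lemma expect_powersetCard_succ {j : ℕ} (hj : j < Fintype.card α) (h : Finset α → ℝ) :
    𝔼 s ∈ powersetCard (j + 1) univ, h s =
      𝔼 T ∈ powersetCard j univ, 𝔼 x ∈ Tᶜ, h (insert x T) := by
  have hinner : ∀ T ∈ powersetCard j (univ : Finset α),
      𝔼 x ∈ Tᶜ, h (insert x T) = (∑ x ∈ Tᶜ, h (insert x T)) / (Fintype.card α - j : ℕ) :=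
    fun T hT => by rw [expect_eq_sum_div_card, card_compl_of_mem_powersetCard hT]
  have hchoose : ((Fintype.card α).choose (j + 1) * (j + 1) : ℝ) =
      (Fintype.card α).choose j * (Fintype.card α - j : ℕ) :=
    mod_cast Nat.choose_succ_right_eq _ _
  have hN₁ : (0 : ℝ) < (Fintype.card α).choose (j + 1) := mod_cast Nat.choose_pos hj
  have hN₀ : (0 : ℝ) < (Fintype.card α).choose j := mod_cast Nat.choose_pos hj.le
  have hm : (0 : ℝ) < (Fintype.card α - j : ℕ) := mod_cast Nat.sub_pos_of_lt hj
  rw [expect_congr rfl hinner, expect_eq_sum_div_card, expect_eq_sum_div_card, ← sum_div,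
    ← succ_nsmul_sum_powersetCard_succ, card_powersetCard, card_powersetCard, card_univ,
    nsmul_eq_mul, div_div, div_eq_div_iff hN₁.ne' (mul_pos hm hN₀).ne']
  push_cast
  linear_combination -(∑ s ∈ powersetCard (j + 1) univ, h s) * hchoose

lemma expect_powersetCard_compl {k : ℕ} (hk : k ≤ Fintype.card α) (h : Finset α → ℝ) :
    𝔼 s ∈ powersetCard (Fintype.card α - k) univ, h sᶜ = 𝔼 s ∈ powersetCard k univ, h s :=
  expect_nbij' compl compl
    (fun s hs => by rw [mem_powersetCard_univ] at hs ⊢; rw [card_compl, hs]; omega)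
    (fun s hs => by rw [mem_powersetCard_univ] at hs ⊢; rw [card_compl, hs])
    (fun s _ => compl_compl s) (fun s _ => compl_compl s) (fun _ _ => rfl)

def ExchangeBounded (k : ℕ) (c : ℝ) (f : Finset α → ℝ) : Prop :=
  ∀ T : Finset α, #T + 1 = k → ∀ x ∉ T, ∀ y ∉ T, |f (insert x T) - f (insert y T)| ≤ c

namespace ExchangeBounded

variable {k j : ℕ} {c : ℝ} {f : Finset α → ℝ}

lemma expect_insert (hc : 0 ≤ c) (hf : ExchangeBounded (j + 1) c f) :
    ExchangeBounded j c (fun T => 𝔼 x ∈ Tᶜ, f (insert x T)) := by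
  intro U hU x hx y hy
  rcases eq_or_ne x y with rfl | hxy
  · simpa using hc
  -- `swap x y` matches the one-element extensions of `insert x U` with those of `insert y U`
  have hmem : ∀ z, z ∈ (insert x U)ᶜ ↔ Equiv.swap x y z ∈ (insert y U)ᶜ := by
    intro z
    rcases eq_or_ne z x with rfl | hzx
    · simp [hy]
    rcases eq_or_ne z y with rfl | hzy
    · simp [hx, hy, hxy, hzx]
    · simp [Equiv.swap_apply_of_ne_of_ne hzx hzy, hzx, hzy]
  have hterm : ∀ z ∈ (insert y U)ᶜ,
      |f (insert (Equiv.swap x y z) (insert x U)) - f (insert z (insert y U))| ≤ c := by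
    intro z hz
    rw [mem_compl, mem_insert, not_or] at hz
    rcases eq_or_ne z x with rfl | hzx
    · simpa [insert_comm] using hc
    rw [Equiv.swap_apply_of_ne_of_ne hzx hz.1, insert_comm z x, insert_comm z y]
    exact hf (insert z U) (by rw [card_insert_of_notMem hz.2, hU])
      x (by simp [hzx.symm, hx]) y (by simp [Ne.symm hz.1, hy])
  dsimp only
  rw [expect_equiv (g := fun w => f (insert (Equiv.swap x y w) (insert x U))) (Equiv.swap x y)
      hmem (fun z _ => by rw [Equiv.swap_apply_self]),
    ← expect_sub_distrib]
  refine (abs_expect_le _ _).trans ?_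
  rcases ((insert y U)ᶜ).eq_empty_or_nonempty with h | h
  · simpa [h] using hc
  · exact expect_le h hterm

lemma compl (hc : 0 ≤ c) (hf : ExchangeBounded k c f) :
    ExchangeBounded (Fintype.card α - k) c (fun s => f sᶜ) := by
  intro T hT x hx y hy
  rcases eq_or_ne x y with rfl | hxy
  · simpa using hc
  set U := (insert x (insert y T))ᶜ
  have hxU : x ∉ U := by simp [U]
  have hyU : y ∉ U := by simp [U]
  have hx' : (insert x T)ᶜ = insert y U := by
    ext z
    rcases eq_or_ne z x with rfl | hzx
    · simp [U, hxy]
    rcases eq_or_ne z y with rfl | hzy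
    · simp [U, hzx, hy]
    · simp [U, hzx, hzy]
  have hy' : (insert y T)ᶜ = insert x U := by
    ext z
    rcases eq_or_ne z y with rfl | hzy
    · simp [U, hxy.symm]
    rcases eq_or_ne z x with rfl | hzx
    · simp [U, hzy, hx]
    · simp [U, hzx, hzy]
  have hU : #U + 1 = k := by
    have hle := card_le_univ (insert x (insert y T))
    rw [card_compl, card_insert_of_notMem (by simp [hxy, hx]), card_insert_of_notMem hy] at *
    omega
  simpa only [hx', hy'] using hf U hU y hyU x hxU

theorem expect_sq_sub_expect_le_mul_sq (hf : ExchangeBounded k c f) (hc : 0 ≤ c) :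
    𝔼 s ∈ powersetCard k univ, (f s - 𝔼 t ∈ powersetCard k univ, f t) ^ 2 ≤ k * c ^ 2 := by
  induction k generalizing f with
  | zero => simp
  | succ j ih =>
    rcases le_or_gt (Fintype.card α) j with hj | hj
    · rw [powersetCard_eq_empty.mpr (by simpa using Nat.lt_succ_of_le hj)]
      simp only [expect_empty]
      positivity
    set g : Finset α → ℝ := fun T => 𝔼 x ∈ Tᶜ, f (insert x T)
    set t := 𝔼 T ∈ powersetCard j univ, g T
    have hne : ∀ T ∈ powersetCard j (univ : Finset α), Tᶜ.Nonempty := fun T hT => by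
      rw [← card_pos, card_compl_of_mem_powersetCard hT]; omega
    have hfibre : ∀ T ∈ powersetCard j univ, 𝔼 x ∈ Tᶜ, (f (insert x T) - g T) ^ 2 ≤ c ^ 2 :=
      fun T hT => expect_sq_sub_expect_le_sq fun x hx y hy =>
        hf T (by rw [mem_powersetCard_univ.mp hT]) x (mem_compl.mp hx) y (mem_compl.mp hy)
    calc 𝔼 s ∈ powersetCard (j + 1) univ, (f s - 𝔼 t ∈ powersetCard (j + 1) univ, f t) ^ 2
        ≤ 𝔼 s ∈ powersetCard (j + 1) univ, (f s - t) ^ 2 := Finset.expect_sq_sub_expect_le _ _ _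
      _ = 𝔼 T ∈ powersetCard j univ, 𝔼 x ∈ Tᶜ, (f (insert x T) - t) ^ 2 :=
        expect_powersetCard_succ hj _
      _ = 𝔼 T ∈ powersetCard j univ, (𝔼 x ∈ Tᶜ, (f (insert x T) - g T) ^ 2 + (g T - t) ^ 2) :=
        expect_congr rfl fun T hT => expect_sq_sub_eq (hne T hT) _ _
      _ ≤ c ^ 2 + j * c ^ 2 := by
        rw [expect_add_distrib]
        exact add_le_add (expect_le (powersetCard_nonempty.mpr (by simpa using hj.le)) hfibre)
          (ih (hf.expect_insert hc))
      _ = (j + 1 : ℕ) * c ^ 2 := by push_cast; ring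

theorem expect_sq_sub_expect_le_min_mul_sq (hf : ExchangeBounded k c f) (hc : 0 ≤ c)
    (hk : k ≤ Fintype.card α) :
    𝔼 s ∈ powersetCard k univ, (f s - 𝔼 t ∈ powersetCard k univ, f t) ^ 2 ≤
      min (k : ℝ) (Fintype.card α - k) * c ^ 2 := by
  rw [min_mul_of_nonneg _ _ (sq_nonneg c)]
  refine le_min (hf.expect_sq_sub_expect_le_mul_sq hc) ?_
  have h := (hf.compl hc).expect_sq_sub_expect_le_mul_sq hc
  rwa [expect_powersetCard_compl hk f,
    expect_powersetCard_compl hk (fun s => (f s - 𝔼 t ∈ powersetCard k univ, f t) ^ 2),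
    Nat.cast_sub hk] at h

end ExchangeBounded

end Finset

namespace Matrix

variable {ι m p : Type*} [DecidableEq ι] [DecidableEq m]

lemma smul_one_le_submatrix {A : Matrix ι ι ℝ} {α : ℝ} (h : α • 1 ≤ A) {e : m → ι}
    (he : Function.Injective e) : α • 1 ≤ A.submatrix e e := by
  have hsub : (A - α • 1).submatrix e e = A.submatrix e e - α • 1 := by
    rw [← submatrix_one _ he]; rfl
  rw [le_iff, ← hsub]
  exact (le_iff.mp h).submatrix e

lemma submatrix_le_smul_one {A : Matrix ι ι ℝ} {β : ℝ} (h : A ≤ β • 1) {e : m → ι}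
    (he : Function.Injective e) : A.submatrix e e ≤ β • 1 := by
  have hsub : (β • 1 - A).submatrix e e = β • 1 - A.submatrix e e := by
    rw [← submatrix_one _ he]; rfl
  rw [le_iff, ← hsub]
  exact (le_iff.mp h).submatrix e

lemma le_apply_self_of_smul_one_le {A : Matrix ι ι ℝ} {α : ℝ} (h : α • 1 ≤ A) (i : ι) :
    α ≤ A i i := by
  simpa using (le_iff.mp h).diag_nonneg (i := i)

lemma apply_self_le_of_le_smul_one {A : Matrix ι ι ℝ} {β : ℝ} (h : A ≤ β • 1) (i : ι) :
    A i i ≤ β := by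
  simpa using (le_iff.mp h).diag_nonneg (i := i)

lemma posDef_of_smul_one_le {A : Matrix ι ι ℝ} {α : ℝ} (hα : 0 < α) (h : α • 1 ≤ A) :
    A.PosDef := by
  simpa using (PosDef.one.smul hα).add_posSemidef (le_iff.mp h)

variable [Fintype m] [Fintype p] [DecidableEq p]

lemma schur_le_smul_one {B : Matrix m m ℝ} {C : Matrix m p ℝ} {D : Matrix p p ℝ}
    (hB : B.PosDef) {β : ℝ} (h : fromBlocks B C Cᴴ D ≤ β • 1) :
    D - Cᴴ * B⁻¹ * C ≤ β • 1 := by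
  have hD : D ≤ β • 1 := submatrix_le_smul_one h Sum.inr_injective
  have hC : 0 ≤ Cᴴ * B⁻¹ * C :=
    nonneg_iff_posSemidef.mpr (hB.inv.posSemidef.conjTranspose_mul_mul_same C)
  exact (sub_le_self D hC).trans hD

lemma smul_one_le_schur {B : Matrix m m ℝ} {C : Matrix m p ℝ} {D : Matrix p p ℝ}
    (hB : B.PosDef) {α : ℝ} (hα : 0 ≤ α) (h : α • 1 ≤ fromBlocks B C Cᴴ D) :
    α • 1 ≤ D - Cᴴ * B⁻¹ * C := by
  have : Invertible B := hB.isUnit.invertible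
  have hshift : fromBlocks B C Cᴴ (D - α • 1) =
      (fromBlocks B C Cᴴ D - α • 1) + diagonal (Sum.elim (fun _ => α) 0) := by
    ext (i | i) (j | j) <;> simp [one_apply, diagonal_apply]
  have hpsd : (fromBlocks B C Cᴴ (D - α • 1)).PosSemidef := by
    rw [hshift]
    exact (le_iff.mp h).add (PosSemidef.diagonal fun i => by cases i <;> simp [hα])
  rw [le_iff, sub_right_comm]
  exact (PosDef.fromBlocks₁₁ C _ hB).mp hpsd

lemma det_submatrix_insert {R : Type*} [CommRing R] (M : Matrix ι ι R)
    {s : Finset ι} {x : ι} (hx : x ∉ s) :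
    (M.submatrix (Subtype.val : {y // y ∈ insert x s} → ι) Subtype.val).det =
      (M.submatrix (Sum.elim (Subtype.val : {y // y ∈ s} → ι) fun _ : Unit => x)
        (Sum.elim Subtype.val fun _ : Unit => x)).det := by
  set E : {y // y ∈ insert x s} ≃ {y // y ∈ s} ⊕ Unit :=
    (subtypeInsertEquivOption hx).trans (Equiv.optionEquivSumPUnit _)
  have hE : Sum.elim (Subtype.val : {y // y ∈ s} → ι) (fun _ : Unit => x) ∘ E = Subtype.val := by
    ext y
    by_cases hy : (y : ι) = x <;> simp [E, subtypeInsertEquivOption, hy]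
  rw [← hE, ← submatrix_submatrix, det_submatrix_equiv_self]

end Matrix

theorem exists_logMinor_insert {n : ℕ} {M : Matrix (Fin n) (Fin n) ℝ} {α β : ℝ} (hα : 0 < α)
    (hlo : α • 1 ≤ M) (hhi : M ≤ β • 1) {s : Finset (Fin n)} {x : Fin n} (hx : x ∉ s) :
    ∃ σ ∈ Set.Icc α β, logMinor M (insert x s) = logMinor M s + Real.log σ := by
  set e : {y // y ∈ s} ⊕ Unit → Fin n := Sum.elim Subtype.val fun _ => x
  have he : Function.Injective e := Subtype.val_injective.sumElim
    (Function.injective_of_subsingleton _) fun i _ => ne_of_mem_of_not_mem i.2 hx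
  set A := M.submatrix e e
  set B := A.toBlocks₁₁
  set C := A.toBlocks₁₂
  set D := A.toBlocks₂₂
  have hM : M.PosDef := posDef_of_smul_one_le hα hlo
  have hA : fromBlocks B C Cᴴ D = A := by
    have hAh : (fromBlocks B C A.toBlocks₂₁ D).IsHermitian := by
      rw [fromBlocks_toBlocks]; exact hM.1.submatrix e
    rw [(isHermitian_fromBlocks_iff.mp hAh).2.1, fromBlocks_toBlocks]
  have hB : B.PosDef := hM.submatrix Subtype.val_injective
  have : Invertible B := hB.isUnit.invertible
  set S := D - Cᴴ * B⁻¹ * C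
  have hαS : α • 1 ≤ S := smul_one_le_schur hB hα.le (hA ▸ smul_one_le_submatrix hlo he)
  have hSβ : S ≤ β • 1 := schur_le_smul_one hB (hA ▸ submatrix_le_smul_one hhi he)
  have hσ : α ≤ S () () := le_apply_self_of_smul_one_le hαS ()
  refine ⟨S () (), ⟨hσ, apply_self_le_of_le_smul_one hSβ ()⟩, ?_⟩
  have hdet : A.det = B.det * S () () := by
    rw [← hA, det_fromBlocks₁₁, invOf_eq_nonsing_inv, det_unique S]
  rw [logMinor, det_submatrix_insert M hx, hdet, Real.log_mul hB.det_pos.ne' (hα.trans_le hσ).ne']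
  rfl

lemma minEig_smul_one_le {n : ℕ} {M : Matrix (Fin n) (Fin n) ℝ} (hM : M.IsHermitian) :
    minEig hM • 1 ≤ M := by
  rw [← Algebra.algebraMap_eq_smul_one, algebraMap_le_iff_le_spectrum hM.isSelfAdjoint,
    hM.spectrum_real_eq_range_eigenvalues]
  rintro _ ⟨i, rfl⟩
  exact ciInf_le (Set.finite_range _).bddBelow i

lemma le_maxEig_smul_one {n : ℕ} {M : Matrix (Fin n) (Fin n) ℝ} (hM : M.IsHermitian) :
    M ≤ maxEig hM • 1 := by
  rw [← Algebra.algebraMap_eq_smul_one, le_algebraMap_iff_spectrum_le hM.isSelfAdjoint,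
    hM.spectrum_real_eq_range_eigenvalues]
  rintro _ ⟨i, rfl⟩
  exact le_ciSup (Set.finite_range _).bddAbove i

lemma minEig_pos {n : ℕ} [NeZero n] {M : Matrix (Fin n) (Fin n) ℝ} (hM : M.PosDef) :
    0 < minEig hM.1 := by
  obtain ⟨i, hi⟩ := exists_eq_ciInf_of_finite (f := hM.1.eigenvalues)
  rw [minEig, ← hi]
  exact hM.eigenvalues_pos i

lemma one_le_condNum {n : ℕ} [NeZero n] {M : Matrix (Fin n) (Fin n) ℝ} (hM : M.PosDef) :
    1 ≤ condNum hM.1 :=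
  (one_le_div (minEig_pos hM)).mpr
    ((ciInf_le (Set.finite_range _).bddBelow 0).trans (le_ciSup (Set.finite_range _).bddAbove 0))

theorem exchangeBounded_logMinor {n : ℕ} {M : Matrix (Fin n) (Fin n) ℝ} (hM : M.PosDef)
    (k : ℕ) : ExchangeBounded k (Real.log (condNum hM.1)) (logMinor M) := by
  intro T _ x hx y hy
  have : NeZero n := ⟨x.pos.ne'⟩
  have hα := minEig_pos hM
  have hlog : ∀ σ ∈ Set.Icc (minEig hM.1) (maxEig hM.1),
      Real.log σ ∈ Set.Icc (Real.log (minEig hM.1)) (Real.log (maxEig hM.1)) :=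
    fun σ hσ => ⟨Real.log_le_log hα hσ.1, Real.log_le_log (hα.trans_le hσ.1) hσ.2⟩
  obtain ⟨σx, hσx, hLx⟩ :=
    exists_logMinor_insert hα (minEig_smul_one_le hM.1) (le_maxEig_smul_one hM.1) hx
  obtain ⟨σy, hσy, hLy⟩ :=
    exists_logMinor_insert hα (minEig_smul_one_le hM.1) (le_maxEig_smul_one hM.1) hy
  have hβ : 0 < maxEig hM.1 := hα.trans_le (hσx.1.trans hσx.2)
  rw [hLx, hLy, add_sub_add_left_eq_sub, ← Real.dist_eq, condNum, Real.log_div hβ.ne' hα.ne']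
  exact Real.dist_le_of_mem_Icc (hlog σx hσx) (hlog σy hσy)

lemma varLM_eq_expect {n : ℕ} (k : ℕ) (M : Matrix (Fin n) (Fin n) ℝ) :
    varLM k M = 𝔼 s ∈ powersetCard k univ,
      (logMinor M s - 𝔼 t ∈ powersetCard k univ, logMinor M t) ^ 2 := by
  simp only [varLM, meanLM, expect_eq_sum_div_card, card_powersetCard, card_univ,
    Fintype.card_fin]

theorem varLM_le_min_mul_log_condNum_sq {n k : ℕ} [NeZero n] (hk : k ≤ n)
    {M : Matrix (Fin n) (Fin n) ℝ} (hM : M.PosDef) :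
    varLM k M ≤ min (k : ℝ) (n - k) * Real.log (condNum hM.1) ^ 2 := by
  rw [varLM_eq_expect]
  simpa using (exchangeBounded_logMinor hM k).expect_sq_sub_expect_le_min_mul_sq
    (Real.log_nonneg (one_le_condNum hM)) (by simpa using hk)

lemma min_le_two_mul_mul_div_add {a b : ℝ} (ha : 0 ≤ a) (hb : 0 ≤ b) :
    min a b ≤ 2 * a * b / (a + b) := by
  rcases (add_nonneg ha hb).eq_or_lt with h | h
  · obtain ⟨rfl, rfl⟩ := (add_eq_zero_iff_of_nonneg ha hb).mp h.symm
    simp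
  rw [le_div_iff₀ h]
  rcases le_total a b with hab | hab
  · rw [min_eq_left hab]; nlinarith
  · rw [min_eq_right hab]; nlinarith

theorem standard_error_bound_one_general {n k : ℕ} (hkn : k < n) (q : ℕ)
    (M : Matrix (Fin n) (Fin n) ℝ) (hM : M.PosDef) (khat : ℝ)
    (hcond : condNum hM.1 ≤ khat) :
    Real.sqrt (varLM k M / q) ≤
      Real.sqrt (6 * (k : ℝ) * ((n : ℝ) - (k : ℝ)) / ((q : ℝ) * (n : ℝ))) *
        Real.log khat := by
  have : NeZero n := ⟨by omega⟩
  have hkn' : (k : ℝ) ≤ n := mod_cast hkn.le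
  have hκ : 0 ≤ Real.log (condNum hM.1) := Real.log_nonneg (one_le_condNum hM)
  have hlog : Real.log (condNum hM.1) ≤ Real.log khat :=
    Real.log_le_log (zero_lt_one.trans_le (one_le_condNum hM)) hcond
  have hvar : varLM k M ≤ 6 * k * (n - k) / n * Real.log khat ^ 2 :=
    calc varLM k M ≤ min (k : ℝ) (n - k) * Real.log (condNum hM.1) ^ 2 :=
          varLM_le_min_mul_log_condNum_sq hkn.le hM
      _ ≤ 2 * k * (n - k) / (k + (n - k)) * Real.log (condNum hM.1) ^ 2 := by
          gcongr
          exact min_le_two_mul_mul_div_add (Nat.cast_nonneg k) (sub_nonneg.mpr hkn')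
      _ ≤ 6 * k * (n - k) / n * Real.log khat ^ 2 := by
          rw [add_sub_cancel]
          gcongr
          norm_num
  have hdiv : varLM k M / q ≤ 6 * k * (n - k) / (q * n) * Real.log khat ^ 2 := by
    rw [show 6 * k * (n - k) / (q * n) * Real.log khat ^ 2 =
      6 * k * (n - k) / n * Real.log khat ^ 2 / q by ring]
    exact div_le_div_of_nonneg_right hvar (Nat.cast_nonneg q)
  calc Real.sqrt (varLM k M / q)
      ≤ Real.sqrt (6 * k * (n - k) / (q * n) * Real.log khat ^ 2) := Real.sqrt_le_sqrt hdiv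
    _ = _ := by
      rw [Real.sqrt_mul' _ (sq_nonneg _), Real.sqrt_sq (hκ.trans hlog)]

theorem standard_error_bound_one {n k : ℕ} (hn : 2 ≤ n) (hk1 : 1 ≤ k) (hkn : k < n)
    (q : ℕ) (hq : 1 ≤ q)
    (M : Matrix (Fin n) (Fin n) ℝ) (hM : M.PosDef) (khat : ℝ) (hkhat : 1 < khat)
    (hcond : condNum hM.1 ≤ khat) :
    Real.sqrt (varLM k M / q) ≤
      Real.sqrt (6 * (k : ℝ) * ((n : ℝ) - (k : ℝ)) / ((q : ℝ) * (n : ℝ))) *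
        Real.log khat :=
  standard_error_bound_one_general hkn q M hM khat hcond
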